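/- arXiv:1701.03197 — 8 statements merged into one kernel-verified Lean document; each statement's English description precedes it below -/
import Mathlib

section
/- Let p be a prime number, let n ≥ 0, and let S be a finite subset of ℕ^{n+1} (tuples (b_0, b_1, …, b_n) of natural numbers) which contains at least one nonzero element. Then there exist integers d_1 > d_2 > … > d_n > 0 and an element x = (b*_0, b*_1, …, b*_n) ∈ S such that, setting w(b_0, b_1, …, b_n) = b_0 + d_1 b_1 + … + d_n b_n: (1) w(b) < w(x) for every b ∈ S with b ≠ x (x is the unique maximizer of w on S); and (2) gcd(b*_0, b*_1, …, b*_n) divides w(x) and p does not divide the quotient w(x) / gcd(b*_0, b*_1, …, b*_n). -/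
/-! Auxiliary construction of super-increasing weights with prescribed residues. -/

private def sAux (p B : ℕ) (r : ℕ → ℕ) : ℕ → ℕ
  | 0 => 0
  | k + 1 => sAux p B r k + (r k % p + p * (B * (1 + sAux p B r k) + 1))

private def dterm (p B : ℕ) (r : ℕ → ℕ) (k : ℕ) : ℕ :=
  r k % p + p * (B * (1 + sAux p B r k) + 1)

private lemma sAux_succ (p B : ℕ) (r : ℕ → ℕ) (k : ℕ) :
    sAux p B r (k + 1) = sAux p B r k + dterm p B r k := rfl

private lemma dterm_pos (p B : ℕ) (hp : 0 < p) (r : ℕ → ℕ) (k : ℕ) :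
    0 < dterm p B r k := by
  have : 0 < p * (B * (1 + sAux p B r k) + 1) := Nat.mul_pos hp (Nat.succ_pos _)
  unfold dterm; omega

private lemma dterm_mod (p B : ℕ) (r : ℕ → ℕ) (k : ℕ) :
    dterm p B r k % p = r k % p := by
  unfold dterm
  simp [Nat.add_mul_mod_self_left, Nat.mod_mod_of_dvd]

private lemma dterm_strictMono (p B : ℕ) (hp : 0 < p) (hB : 0 < B) (r : ℕ → ℕ) :
    StrictMono (dterm p B r) := by
  apply strictMono_nat_of_lt_succ
  intro k
  have h3 : r k % p < p := Nat.mod_lt _ hp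
  have hd1 : 1 ≤ dterm p B r k := dterm_pos p B hp r k
  have h2 : p ≤ p * (B * dterm p B r k) :=
    Nat.le_mul_of_pos_right _ (Nat.mul_pos hB hd1)
  have expand : p * (B * (1 + sAux p B r (k + 1)) + 1)
      = p * (B * (1 + sAux p B r k) + 1) + p * (B * dterm p B r k) := by
    rw [sAux_succ]; ring
  show r k % p + p * (B * (1 + sAux p B r k) + 1)
      < r (k + 1) % p + p * (B * (1 + sAux p B r (k + 1)) + 1)
  omega

private lemma sAux_eq_sum (p B : ℕ) (r : ℕ → ℕ) (m : ℕ) :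
    sAux p B r m = ∑ k ∈ Finset.range m, dterm p B r k := by
  induction m with
  | zero => rfl
  | succ m ih => rw [Finset.sum_range_succ, sAux_succ, ih]

/-- Construction of the weights with given residues mod `p`. -/
private lemma exists_good_d (p B n : ℕ) (hp : 0 < p) (hB : 0 < B) (rf : Fin n → ℕ) :
    ∃ d : Fin n → ℕ, (∀ i, 0 < d i) ∧ (∀ i j : Fin n, i < j → d j < d i) ∧
      (∀ i : Fin n, B * (1 + ∑ j ∈ Finset.Ioi i, d j) < d i) ∧
      (∀ i : Fin n, d i % p = rf i % p) := by
  set r : ℕ → ℕ := fun k => if h : n - 1 - k < n then rf ⟨n - 1 - k, h⟩ else 0 with hr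
  refine ⟨fun i => dterm p B r (n - 1 - i.val), ?_, ?_, ?_, ?_⟩
  · intro i; exact dterm_pos p B hp r _
  · intro i j hij
    apply dterm_strictMono p B hp hB r
    have := i.isLt; have := j.isLt
    have : i.val < j.val := hij
    omega
  · intro i
    have hn : 0 < n := i.pos
    have hsum : ∑ j ∈ Finset.Ioi i, dterm p B r (n - 1 - j.val)
        = sAux p B r (n - 1 - i.val) := by
      rw [sAux_eq_sum]
      refine Finset.sum_nbij' (fun j => n - 1 - j.val)
        (fun k => (⟨n - 1 - k, by omega⟩ : Fin n)) ?_ ?_ ?_ ?_ ?_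
      · intro a ha
        rw [Finset.mem_Ioi] at ha
        have h1 : i.val < a.val := ha
        have := a.isLt
        simp only [Finset.mem_range]
        omega
      · intro a ha
        rw [Finset.mem_range] at ha
        rw [Finset.mem_Ioi]
        have := i.isLt
        show i.val < n - 1 - a
        omega
      · intro a ha
        rw [Finset.mem_Ioi] at ha
        have h1 : i.val < a.val := ha
        have := a.isLt
        apply Fin.ext
        show n - 1 - (n - 1 - a.val) = a.val
        omega
      · intro a ha
        rw [Finset.mem_range] at ha
        show n - 1 - (n - 1 - a) = a
        omega
      · intro a _; rfl
    rw [hsum]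
    set X := B * (1 + sAux p B r (n - 1 - i.val)) with hX
    have h1 : X + 1 ≤ p * (X + 1) := Nat.le_mul_of_pos_left _ hp
    show X < r (n - 1 - i.val) % p + p * (X + 1)
    omega
  · intro i
    rw [dterm_mod]
    have := i.isLt
    have h : n - 1 - (n - 1 - i.val) < n := by omega
    rw [hr]
    simp only [h, dif_pos]
    congr 2
    apply Fin.ext
    show n - 1 - (n - 1 - i.val) = i.val
    omega

/-- Splitting a sum over `Fin n` at an index. -/
private lemma sum_split {n : ℕ} (i : Fin n) (f : Fin n → ℕ) :
    ∑ j, f j = (∑ j ∈ Finset.Iio i, f j) + f i + ∑ j ∈ Finset.Ioi i, f j := by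
  have h : (Finset.univ : Finset (Fin n)) = (Finset.Iio i ∪ {i}) ∪ Finset.Ioi i := by
    ext j
    simp only [Finset.mem_univ, Finset.mem_union, Finset.mem_Iio, Finset.mem_singleton,
      Finset.mem_Ioi, true_iff]
    rcases lt_trichotomy j i with h | h | h
    · exact Or.inl (Or.inl h)
    · exact Or.inl (Or.inr h)
    · exact Or.inr h
  have hd1 : Disjoint (Finset.Iio i) ({i} : Finset (Fin n)) := by
    rw [Finset.disjoint_left]
    intro a ha hb
    rw [Finset.mem_Iio] at ha
    rw [Finset.mem_singleton] at hb
    subst hb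
    exact lt_irrefl _ ha
  have hd2 : Disjoint (Finset.Iio i ∪ {i}) (Finset.Ioi i) := by
    rw [Finset.disjoint_left]
    intro a ha ha'
    rw [Finset.mem_union, Finset.mem_Iio, Finset.mem_singleton] at ha
    rw [Finset.mem_Ioi] at ha'
    rcases ha with h | h
    · exact absurd (h.trans ha') (lt_irrefl _)
    · subst h; exact absurd ha' (lt_irrefl _)
  rw [h, Finset.sum_union hd2, Finset.sum_union hd1, Finset.sum_singleton]

/-- The lexicographic-type relation on tuples used for the weight order. -/
private def LexLt {n : ℕ} (b x : Fin (n + 1) → ℕ) : Prop :=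
  (∃ i : Fin n, b i.succ < x i.succ ∧ ∀ j : Fin n, j < i → b j.succ = x j.succ)
  ∨ ((∀ i : Fin n, b i.succ = x i.succ) ∧ b 0 < x 0)

private lemma lexLt_trichotomy {n : ℕ} (b x : Fin (n + 1) → ℕ) (hne : b ≠ x) :
    LexLt b x ∨ LexLt x b := by
  classical
  set T : Finset (Fin n) := Finset.univ.filter (fun i => b i.succ ≠ x i.succ) with hT
  by_cases hTne : T.Nonempty
  · obtain ⟨i, hiT, hmin⟩ := T.exists_min_image id hTne
    have hi : b i.succ ≠ x i.succ := by
      rw [hT] at hiT; simpa using hiT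
    have hpre : ∀ j : Fin n, j < i → b j.succ = x j.succ := by
      intro j hj
      by_contra hne'
      have hjT : j ∈ T := by rw [hT]; simpa using hne'
      have := hmin j hjT
      exact absurd (lt_of_le_of_lt this hj) (lt_irrefl _)
    rcases lt_or_gt_of_ne hi with h | h
    · exact Or.inl (Or.inl ⟨i, h, hpre⟩)
    · exact Or.inr (Or.inl ⟨i, h, fun j hj => (hpre j hj).symm⟩)
  · have hall : ∀ i : Fin n, b i.succ = x i.succ := by
      intro i
      by_contra hne'
      exact hTne ⟨i, by rw [hT]; simpa using hne'⟩
    have h0 : b 0 ≠ x 0 := by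
      intro h0
      apply hne
      funext j
      induction j using Fin.cases with
      | zero => exact h0
      | succ i => exact hall i
    rcases lt_or_gt_of_ne h0 with h | h
    · exact Or.inl (Or.inr ⟨hall, h⟩)
    · exact Or.inr (Or.inr ⟨fun i => (hall i).symm, h⟩)

/-- Monotonicity of the weight w.r.t. the lexicographic relation. -/
private lemma weight_lt_of_lexLt {n B : ℕ} (d : Fin n → ℕ)
    (hd : ∀ i : Fin n, B * (1 + ∑ j ∈ Finset.Ioi i, d j) < d i)
    (b x : Fin (n + 1) → ℕ) (hb : ∀ i, b i ≤ B) (hlex : LexLt b x) :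
    b 0 + ∑ i : Fin n, d i * b i.succ < x 0 + ∑ i : Fin n, d i * x i.succ := by
  rcases hlex with ⟨i, hbi, hpre⟩ | ⟨hall, h0⟩
  · rw [sum_split i (fun j => d j * b j.succ), sum_split i (fun j => d j * x j.succ)]
    have hIio : ∑ j ∈ Finset.Iio i, d j * b j.succ = ∑ j ∈ Finset.Iio i, d j * x j.succ := by
      apply Finset.sum_congr rfl
      intro j hj
      rw [Finset.mem_Iio] at hj
      rw [hpre j hj]
    have hso : ∑ j ∈ Finset.Ioi i, d j * b j.succ ≤ B * ∑ j ∈ Finset.Ioi i, d j := by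
      rw [Finset.mul_sum]
      apply Finset.sum_le_sum
      intro j _
      calc d j * b j.succ ≤ d j * B := Nat.mul_le_mul_left _ (hb _)
        _ = B * d j := Nat.mul_comm _ _
    have hkey : b 0 + ∑ j ∈ Finset.Ioi i, d j * b j.succ < d i := by
      have h1 : b 0 ≤ B := hb 0
      have h2 := hd i
      have h3 : B * (1 + ∑ j ∈ Finset.Ioi i, d j)
          = B + B * ∑ j ∈ Finset.Ioi i, d j := by ring
      omega
    have hxi : d i * b i.succ + d i ≤ d i * x i.succ := by
      calc d i * b i.succ + d i = d i * (b i.succ + 1) := by ring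
        _ ≤ d i * x i.succ := Nat.mul_le_mul_left _ hbi
    rw [hIio]
    omega
  · have hsum : ∑ i : Fin n, d i * b i.succ = ∑ i : Fin n, d i * x i.succ := by
      apply Finset.sum_congr rfl
      intro j _
      rw [hall j]
    rw [hsum]
    omega

/-- **Combinatorial weight lemma.** Let `p` be a prime, `n ≥ 0`, and `S` a finite nonempty set of
tuples in `ℕ^{n+1}` containing a nonzero element. Then there exist weights `d 0 > ⋯ > d (n-1) > 0`
and an element `x ∈ S` such that, for `w b = b 0 + ∑ i, d i * b i.succ`, the element `x` is the
unique maximizer of `w` on `S`, the gcd of the coordinates of `x` divides `w x`, and `p` does not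
divide `w x / gcd`. -/
theorem exists_weights_unique_max_gcd
    (p n : ℕ) (hp : p.Prime) (S : Finset (Fin (n + 1) → ℕ))
    (hS : ∃ b ∈ S, b ≠ 0) :
    ∃ (d : Fin n → ℕ) (x : Fin (n + 1) → ℕ), x ∈ S ∧
      (∀ i, 0 < d i) ∧ (∀ i j : Fin n, i < j → d j < d i) ∧
      (∀ b ∈ S, b ≠ x →
        b 0 + ∑ i : Fin n, d i * b i.succ < x 0 + ∑ i : Fin n, d i * x i.succ) ∧
      Finset.univ.gcd x ∣ (x 0 + ∑ i : Fin n, d i * x i.succ) ∧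
      ¬ p ∣ (x 0 + ∑ i : Fin n, d i * x i.succ) / Finset.univ.gcd x := by
  classical
  haveI : NeZero p := ⟨hp.ne_zero⟩
  obtain ⟨b0, hb0S, hb0⟩ := hS
  obtain ⟨B, hBpos, hbd⟩ : ∃ B : ℕ, 0 < B ∧ ∀ b ∈ S, ∀ i, b i ≤ B := by
    refine ⟨1 + ∑ b ∈ S, ∑ i, b i, Nat.lt_of_lt_of_le one_pos (Nat.le_add_right _ _), ?_⟩
    intro b hb i
    have h1 : b i ≤ ∑ i, b i :=
      Finset.single_le_sum (fun _ _ => Nat.zero_le _) (Finset.mem_univ i)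
    have h2 : (∑ i, b i) ≤ ∑ c ∈ S, ∑ i, c i :=
      Finset.single_le_sum (fun _ _ => Nat.zero_le _) hb
    exact le_trans h1 (le_trans h2 (Nat.le_add_left _ 1))
  -- pick a preliminary weight system and the maximizer
  obtain ⟨d0, _, _, hd0key, _⟩ := exists_good_d p B n hp.pos hBpos (fun _ => 0)
  obtain ⟨x, hxS, hxmax⟩ :=
    S.exists_max_image (fun b => b 0 + ∑ i : Fin n, d0 i * b i.succ) ⟨b0, hb0S⟩
  -- x is the strict maximizer for ANY super-increasing weight system
  have hstrict : ∀ d : Fin n → ℕ, (∀ i : Fin n, B * (1 + ∑ j ∈ Finset.Ioi i, d j) < d i) →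
      ∀ b ∈ S, b ≠ x →
        b 0 + ∑ i : Fin n, d i * b i.succ < x 0 + ∑ i : Fin n, d i * x i.succ := by
    intro d hd b hbS hbx
    rcases lexLt_trichotomy b x hbx with h | h
    · exact weight_lt_of_lexLt d hd b x (hbd b hbS) h
    · exfalso
      have := weight_lt_of_lexLt d0 hd0key x b (hbd x hxS) h
      exact absurd (hxmax b hbS) (not_le.mpr this)
  -- x is nonzero
  have hxne : x ≠ 0 := by
    intro hx0
    have hb0x : b0 ≠ x := by rw [hx0]; exact hb0
    have := hstrict d0 hd0key b0 hb0S hb0x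
    rw [hx0] at this
    simp at this
  -- gcd facts
  set g : ℕ := Finset.univ.gcd x with hgdef
  have hgd : ∀ i, g ∣ x i := fun i => Finset.gcd_dvd (Finset.mem_univ i)
  have hgpos : 0 < g := by
    rcases Nat.eq_zero_or_pos g with h | h
    · exfalso
      apply hxne
      funext i
      have := Finset.gcd_eq_zero_iff.mp h i (Finset.mem_univ i)
      exact this
    · exact h
  set y : Fin (n + 1) → ℕ := fun i => x i / g with hydef
  have hxy : ∀ i, x i = g * y i := fun i => (Nat.mul_div_cancel' (hgd i)).symm
  obtain ⟨i0', hi0'⟩ : ∃ i, x i ≠ 0 := by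
    by_contra h
    push_neg at h
    exact hxne (funext h)
  have hy1 : Finset.univ.gcd y = 1 :=
    Finset.gcd_div_eq_one (Finset.mem_univ i0') hi0'
  -- choose residues
  have hkey : ∃ rf : Fin n → ℕ,
      ((y 0 : ZMod p) + ∑ i : Fin n, (rf i : ZMod p) * (y i.succ : ZMod p)) ≠ 0 := by
    by_cases hall : ∀ i : Fin n, p ∣ y i.succ
    · refine ⟨fun _ => 0, ?_⟩
      simp only [Nat.cast_zero, zero_mul, Finset.sum_const_zero, add_zero]
      rw [Ne, ZMod.natCast_eq_zero_iff]
      intro hdvd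
      have hpall : ∀ i, p ∣ y i := by
        intro i
        induction i using Fin.cases with
        | zero => exact hdvd
        | succ j => exact hall j
      have : p ∣ Finset.univ.gcd y := Finset.dvd_gcd (fun i _ => hpall i)
      rw [hy1] at this
      exact absurd (Nat.le_of_dvd one_pos this) (not_le.mpr hp.one_lt)
    · push_neg at hall
      obtain ⟨i0, hi0⟩ := hall
      set t : ℕ := if p ∣ y 0 then 1 else 0 with htdef
      refine ⟨fun j => if j = i0 then t else 0, ?_⟩
      have hsum : ∑ i : Fin n, ((if i = i0 then t else 0 : ℕ) : ZMod p) * (y i.succ : ZMod p)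
          = (t : ZMod p) * (y i0.succ : ZMod p) := by
        have hterm : ∀ i : Fin n,
            ((if i = i0 then t else 0 : ℕ) : ZMod p) * (y i.succ : ZMod p)
            = if i = i0 then (t : ZMod p) * (y i.succ : ZMod p) else 0 := by
          intro i; split <;> simp
        rw [Finset.sum_congr rfl (fun i _ => hterm i),
          Finset.sum_ite_eq' Finset.univ i0 (fun i => (t : ZMod p) * (y i.succ : ZMod p))]
        simp
      rw [hsum]
      by_cases hp0 : p ∣ y 0
      · have ht1 : t = 1 := if_pos hp0
        have hy00 : (y 0 : ZMod p) = 0 := (ZMod.natCast_eq_zero_iff _ _).mpr hp0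
        rw [ht1, hy00]
        simp only [Nat.cast_one, one_mul, zero_add]
        rw [Ne, ZMod.natCast_eq_zero_iff]
        exact hi0
      · have ht0 : t = 0 := if_neg hp0
        rw [ht0]
        simp only [Nat.cast_zero, zero_mul, add_zero]
        rw [Ne, ZMod.natCast_eq_zero_iff]
        exact hp0
  obtain ⟨rf, hrf⟩ := hkey
  obtain ⟨d, hdpos, hdanti, hdkey, hdmod⟩ := exists_good_d p B n hp.pos hBpos rf
  refine ⟨d, x, hxS, hdpos, hdanti, hstrict d hdkey, ?_, ?_⟩
  · -- gcd divides
    have hW : x 0 + ∑ i : Fin n, d i * x i.succ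
        = g * (y 0 + ∑ i : Fin n, d i * y i.succ) := by
      have hterm : ∀ i : Fin n, d i * x i.succ = g * (d i * y i.succ) := by
        intro i; rw [hxy i.succ]; ring
      rw [hxy 0, Finset.sum_congr rfl (fun i _ => hterm i), ← Finset.mul_sum, ← Nat.mul_add]
    exact hW ▸ Dvd.intro _ rfl
  · have hW : x 0 + ∑ i : Fin n, d i * x i.succ
        = g * (y 0 + ∑ i : Fin n, d i * y i.succ) := by
      have hterm : ∀ i : Fin n, d i * x i.succ = g * (d i * y i.succ) := by
        intro i; rw [hxy i.succ]; ring
      rw [hxy 0, Finset.sum_congr rfl (fun i _ => hterm i), ← Finset.mul_sum, ← Nat.mul_add]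
    rw [hW, Nat.mul_div_cancel_left _ hgpos]
    intro hdvd
    apply hrf
    have h0 : ((y 0 + ∑ i : Fin n, d i * y i.succ : ℕ) : ZMod p) = 0 :=
      (ZMod.natCast_eq_zero_iff _ _).mpr hdvd
    rw [← h0]
    push_cast
    congr 1
    apply Finset.sum_congr rfl
    intro i _
    congr 1
    rw [← ZMod.natCast_mod (rf i) p, ← hdmod i, ZMod.natCast_mod]
end

section
/- Let n ≥ 0, let S be a finite subset of ℕ^{n+1}, and let A be a natural number such that |b_i − b'_i| ≤ A for all b, b' ∈ S and all indices 0 ≤ i ≤ n (A bounds the ℓ∞-diameter of S). Let d_1, …, d_n be positive integers satisfying d_1 > A and d_{i+1} > A·(1 + d_1 + … + d_i) for all i = 1, …, n−1. Then the weight function w(b_0, b_1, …, b_n) = b_0 + d_1 b_1 + … + d_n b_n is injective on S. -/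
/-- **Injectivity of the weight function.** Let `S` be a finite set of tuples in `ℕ^{n+1}` of
`ℓ^∞`-diameter at most `A`, and let `d 0, …, d (n-1)` be positive integers with
`d i > A * (1 + ∑_{j < i} d j)` for each `i` (in particular `d 0 > A`). Then the weight function
`w b = b 0 + ∑ i, d i * b i.succ` is injective on `S`. -/
theorem weight_injOn_of_rapid_growth
    (n : ℕ) (S : Finset (Fin (n + 1) → ℕ)) (A : ℕ)
    (hA : ∀ b ∈ S, ∀ b' ∈ S, ∀ i : Fin (n + 1), |(b i : ℤ) - (b' i : ℤ)| ≤ (A : ℤ))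
    (d : Fin n → ℕ) (hd : ∀ i, 0 < d i)
    (hgap : ∀ i : Fin n, A * (1 + ∑ j ∈ Finset.univ.filter (fun j => j < i), d j) < d i) :
    Set.InjOn (fun b : Fin (n + 1) → ℕ => b 0 + ∑ i : Fin n, d i * b i.succ) ↑S := by
  intro b hb b' hb' heq
  simp only [Finset.mem_coe] at hb hb'
  set Δ : Fin (n + 1) → ℤ := fun k => (b k : ℤ) - (b' k : ℤ) with hΔ
  have habs : ∀ k, |Δ k| ≤ (A : ℤ) := fun k => hA b hb b' hb' k
  have hcast : Δ 0 + ∑ i : Fin n, (d i : ℤ) * Δ i.succ = 0 := by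
    have h := congrArg (fun x : ℕ => (x : ℤ)) heq
    push_cast at h
    simp only [hΔ, mul_sub, Finset.sum_sub_distrib]
    linarith [h]
  by_cases hall : ∀ i : Fin n, b i.succ = b' i.succ
  · have hsum : ∑ i : Fin n, (d i : ℤ) * Δ i.succ = 0 := by
      apply Finset.sum_eq_zero
      intro i _
      simp [hΔ, hall i]
    have h0 : Δ 0 = 0 := by linarith [hcast, hsum]
    funext k
    refine Fin.cases ?_ ?_ k
    · have := sub_eq_zero.mp h0
      exact_mod_cast this
    · exact fun i => hall i
  · push_neg at hall
    set T : Finset (Fin n) := Finset.univ.filter (fun i => b i.succ ≠ b' i.succ) with hT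
    have hTne : T.Nonempty := by
      obtain ⟨i, hi⟩ := hall
      exact ⟨i, by simp [hT, hi]⟩
    set m := T.max' hTne with hm
    have hmT : m ∈ T := T.max'_mem hTne
    have hne : b m.succ ≠ b' m.succ := by
      simpa [hT] using hmT
    have hgt : ∀ j : Fin n, m < j → Δ j.succ = 0 := by
      intro j hj
      by_contra hjz
      have : j ∈ T := by
        simp only [hT, Finset.mem_filter, Finset.mem_univ, true_and]
        intro hjeq
        exact hjz (by simp [hΔ, hjeq])
      exact absurd (T.le_max' j this) (not_le.mpr hj)
    -- split the sum
    have hsplit : ∑ i : Fin n, (d i : ℤ) * Δ i.succ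
        = ∑ i ∈ Finset.univ.filter (fun j => j ≤ m), (d i : ℤ) * Δ i.succ := by
      symm
      apply Finset.sum_subset (Finset.filter_subset _ _)
      intro j _ hj
      simp only [Finset.mem_filter, Finset.mem_univ, true_and, not_le] at hj
      rw [hgt j hj, mul_zero]
    have hfilter : Finset.univ.filter (fun j => j ≤ m)
        = insert m (Finset.univ.filter (fun j => j < m)) := by
      ext j
      simp [Finset.mem_insert, le_iff_lt_or_eq, or_comm]
    have hmem : m ∉ Finset.univ.filter (fun j : Fin n => j < m) := by simp
    have hkey : (d m : ℤ) * Δ m.succ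
        + (Δ 0 + ∑ i ∈ Finset.univ.filter (fun j => j < m), (d i : ℤ) * Δ i.succ) = 0 := by
      rw [hsplit, hfilter, Finset.sum_insert hmem] at hcast
      linarith [hcast]
    have h1 : (1 : ℤ) ≤ |Δ m.succ| := by
      apply Int.one_le_abs
      simp only [hΔ, sub_ne_zero]
      exact_mod_cast hne
    have hlb : (d m : ℤ) ≤ |(d m : ℤ) * Δ m.succ| := by
      rw [abs_mul, abs_of_nonneg (by positivity : (0:ℤ) ≤ (d m : ℤ))]
      nlinarith [h1, (hd m)]
    have hub : |(d m : ℤ) * Δ m.succ|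
        ≤ (A : ℤ) * (1 + ∑ j ∈ Finset.univ.filter (fun j => j < m), (d j : ℤ)) := by
      have : (d m : ℤ) * Δ m.succ
          = -(Δ 0 + ∑ i ∈ Finset.univ.filter (fun j => j < m), (d i : ℤ) * Δ i.succ) := by
        linarith [hkey]
      rw [this, abs_neg]
      calc |Δ 0 + ∑ i ∈ Finset.univ.filter (fun j => j < m), (d i : ℤ) * Δ i.succ|
          ≤ |Δ 0| + |∑ i ∈ Finset.univ.filter (fun j => j < m), (d i : ℤ) * Δ i.succ| :=
            abs_add_le _ _
        _ ≤ (A : ℤ) + ∑ i ∈ Finset.univ.filter (fun j => j < m), (d i : ℤ) * (A : ℤ) := by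
            apply add_le_add (habs 0)
            refine le_trans (Finset.abs_sum_le_sum_abs _ _) (Finset.sum_le_sum fun i _ => ?_)
            rw [abs_mul, abs_of_nonneg (by positivity : (0:ℤ) ≤ (d i : ℤ))]
            exact mul_le_mul_of_nonneg_left (habs i.succ) (by positivity)
        _ = (A : ℤ) * (1 + ∑ j ∈ Finset.univ.filter (fun j => j < m), (d j : ℤ)) := by
            rw [mul_add, mul_one, Finset.mul_sum]
            congr 1
            exact Finset.sum_congr rfl fun i _ => mul_comm _ _
    have hgapZ : (A : ℤ) * (1 + ∑ j ∈ Finset.univ.filter (fun j => j < m), (d j : ℤ))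
        < (d m : ℤ) := by exact_mod_cast hgap m
    linarith [hlb, hub, hgapZ]
end

section
/- Let p be a prime, let k be an algebraically closed field of characteristic p, let A = k[x_0, …, x_n] be a polynomial ring, and let r ≥ 0. For every truncated Witt vector f ∈ W_{r+1}(A) of length r+1 there exists g ∈ W_{r+1}(A) such that, writing h = f + g − F(g) where F is the Frobenius on W_{r+1}(A), every component h_i ∈ A of h (for 0 ≤ i ≤ r) has zero coefficient at every p-th power monomial; that is, for every exponent vector d ∈ ℕ^{n+1} with all entries divisible by p (including d = 0), the coefficient of x^d in h_i is zero. -/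
/-- The Frobenius on truncated Witt vectors over a ring of characteristic `p`: it raises each
Witt component to the `p`-th power. -/
noncomputable def truncatedWittFrobenius (p m : ℕ) {R : Type*} [CommRing R]
    (x : TruncatedWittVector p m R) : TruncatedWittVector p m R :=
  TruncatedWittVector.mk p fun i => TruncatedWittVector.coeff i x ^ p

open MvPolynomial

namespace WittAux


variable {p : ℕ} [hp : Fact p.Prime]

/-! ### A universal additivity lemma for Witt vector coefficients -/

theorem coeff_add_low_aux {R : Type*} [CommRing R] [Invertible (p : R)]
    (m : ℕ) (x y : WittVector p R) (hy : ∀ j < m, y.coeff j = 0) :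
    ∀ j, j ≤ m → (x + y).coeff j = x.coeff j + y.coeff j := by
  intro j
  induction j using Nat.strong_induction_on with
  | _ j IH =>
    intro hj
    have hg : WittVector.ghostComponent (p := p) j (x + y)
        = WittVector.ghostComponent j x + WittVector.ghostComponent j y := map_add _ _ _
    rw [WittVector.ghostComponent_apply, WittVector.ghostComponent_apply,
      WittVector.ghostComponent_apply, aeval_wittPolynomial, aeval_wittPolynomial,
      aeval_wittPolynomial, Finset.sum_range_succ, Finset.sum_range_succ,
      Finset.sum_range_succ] at hg
    have hylow : ∀ i ∈ Finset.range j, (p : R) ^ i * y.coeff i ^ p ^ (j - i) = 0 := by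
      intro i hi
      rw [hy i (lt_of_lt_of_le (Finset.mem_range.mp hi) hj),
        zero_pow (pow_ne_zero _ hp.out.ne_zero), mul_zero]
    have hsum : ∑ i ∈ Finset.range j, (p : R) ^ i * (x + y).coeff i ^ p ^ (j - i)
        = ∑ i ∈ Finset.range j, (p : R) ^ i * x.coeff i ^ p ^ (j - i) := by
      refine Finset.sum_congr rfl fun i hi => ?_
      have hi' := Finset.mem_range.mp hi
      rw [IH i hi' (le_of_lt (lt_of_lt_of_le hi' hj)), hy i (lt_of_lt_of_le hi' hj), add_zero]
    rw [hsum, Finset.sum_eq_zero hylow, Nat.sub_self, pow_zero, pow_one, pow_one, pow_one] at hg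
    have hcancel : (p : R) ^ j * (x + y).coeff j = (p : R) ^ j * (x.coeff j + y.coeff j) := by
      linear_combination hg
    haveI : Invertible ((p : R) ^ j) := invertiblePow _ _
    exact (isUnit_of_invertible ((p : R) ^ j)).mul_left_cancel hcancel

theorem coeff_add_low {R : Type*} [CommRing R]
    (m : ℕ) (x y : WittVector p R) (hy : ∀ j < m, y.coeff j = 0)
    {j : ℕ} (hj : j ≤ m) :
    (x + y).coeff j = x.coeff j + y.coeff j := by
  classical
  let S := MvPolynomial (ℕ ⊕ ℕ) ℤ
  let xx : WittVector p S := WittVector.mk p fun i => X (Sum.inl i)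
  let yy : WittVector p S := WittVector.mk p fun i => if i < m then 0 else X (Sum.inr i)
  have hxxc : ∀ i, xx.coeff i = X (Sum.inl i) := fun i => rfl
  have hyyc : ∀ i, yy.coeff i = if i < m then 0 else X (Sum.inr i) := fun i => rfl
  -- the universal identity
  have key : (xx + yy).coeff j = xx.coeff j + yy.coeff j := by
    have hinj : Function.Injective
        (MvPolynomial.map (Int.castRingHom ℚ) : S →+* MvPolynomial (ℕ ⊕ ℕ) ℚ) :=
      MvPolynomial.map_injective _ Int.cast_injective
    apply hinj
    haveI : NeZero p := ⟨hp.out.ne_zero⟩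
    let ψ : S →+* MvPolynomial (ℕ ⊕ ℕ) ℚ := MvPolynomial.map (Int.castRingHom ℚ)
    have h1 : (ψ ((xx + yy).coeff j) : MvPolynomial (ℕ ⊕ ℕ) ℚ)
        = (WittVector.map ψ xx + WittVector.map ψ yy).coeff j := by
      rw [← map_add, WittVector.map_coeff]
    have h2 : (WittVector.map ψ xx + WittVector.map ψ yy).coeff j
        = (WittVector.map ψ xx).coeff j + (WittVector.map ψ yy).coeff j := by
      refine coeff_add_low_aux m _ _ (fun i hi => ?_) j hj
      rw [WittVector.map_coeff, hyyc i, if_pos hi, map_zero]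
    rw [map_add, h1, h2, WittVector.map_coeff, WittVector.map_coeff]
  -- transfer to `R`
  let φ : S →+* R := MvPolynomial.eval₂Hom (Int.castRingHom R) (Sum.elim x.coeff y.coeff)
  have h1 : WittVector.map φ xx = x := by
    apply WittVector.ext; intro i
    rw [WittVector.map_coeff, hxxc i, eval₂Hom_X']
    rfl
  have h2 : WittVector.map φ yy = y := by
    apply WittVector.ext; intro i
    rw [WittVector.map_coeff, hyyc i]
    split_ifs with hi
    · rw [map_zero, hy i hi]
    · rw [eval₂Hom_X']; rfl
  calc (x + y).coeff j = φ ((xx + yy).coeff j) := by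
        rw [← h1, ← h2, ← map_add, WittVector.map_coeff]
    _ = φ (xx.coeff j) + φ (yy.coeff j) := by rw [key, map_add]
    _ = x.coeff j + y.coeff j := by
        rw [← WittVector.map_coeff φ xx, ← WittVector.map_coeff φ yy, h1, h2]

/-! ### Coefficients of iterated Verschiebung of Teichmüller lifts -/

theorem iterate_verschiebung_coeff_lt {R : Type*} [CommRing R] (x : WittVector p R)
    (m j : ℕ) (hj : j < m) : (WittVector.verschiebung^[m] x).coeff j = 0 := by
  induction m generalizing j with
  | zero => omega
  | succ m ih =>
    rw [Function.iterate_succ_apply']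
    cases j with
    | zero => exact WittVector.verschiebung_coeff_zero _
    | succ j => rw [WittVector.verschiebung_coeff_succ]; exact ih j (by omega)

theorem iterate_verschiebung_sub {R : Type*} [CommRing R] (x y : WittVector p R) (m : ℕ) :
    WittVector.verschiebung^[m] (x - y)
      = WittVector.verschiebung^[m] x - WittVector.verschiebung^[m] y := by
  induction m with
  | zero => rfl
  | succ m ih =>
    rw [Function.iterate_succ_apply', Function.iterate_succ_apply',
      Function.iterate_succ_apply', ih, map_sub]

theorem coeff_iterate_teichmuller {R : Type*} [CommRing R] (a : R) (m i : ℕ) :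
    (WittVector.verschiebung^[m] (WittVector.teichmuller p a)).coeff i
      = if i = m then a else 0 := by
  rcases lt_trichotomy i m with h | rfl | h
  · rw [iterate_verschiebung_coeff_lt _ _ _ h, if_neg h.ne]
  · rw [if_pos rfl]
    have := WittVector.iterate_verschiebung_coeff (x := WittVector.teichmuller p a) i 0
    rw [zero_add] at this
    rw [this, WittVector.teichmuller_coeff_zero]
  · rw [if_neg h.ne']
    obtain ⟨j, rfl⟩ := Nat.exists_eq_add_of_lt h
    have harith : m + j + 1 = (j + 1) + m := by omega
    rw [harith, WittVector.iterate_verschiebung_coeff]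
    exact WittVector.teichmuller_coeff_pos p a (j + 1) (Nat.succ_pos j)



set_option linter.unusedSectionVars false

variable {p : ℕ} [hp : Fact p.Prime] {σ : Type*} {k : Type*} [Field k] [IsAlgClosed k]
  [CharP k p] [ExpChar k p]

open Classical in
/-- The part of a polynomial supported on `p`-th power monomials. -/
noncomputable def pPart (p : ℕ) (h : MvPolynomial σ k) : MvPolynomial σ k :=
  ∑ d ∈ h.support.filter (fun d => ∀ j, p ∣ d j), monomial d (coeff d h)

open Classical in
theorem coeff_pPart (h : MvPolynomial σ k) (d : σ →₀ ℕ) :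
    coeff d (pPart p h) = if (∀ j, p ∣ d j) then coeff d h else 0 := by
  rw [pPart, coeff_sum]
  simp only [coeff_monomial]
  rw [Finset.sum_ite_eq' _ d (fun d' => coeff d' h)]
  by_cases hd : ∀ j, p ∣ d j
  · rw [if_pos hd]
    by_cases hs : d ∈ h.support
    · rw [if_pos (Finset.mem_filter.mpr ⟨hs, hd⟩)]
    · rw [if_neg (fun hmem => hs (Finset.mem_filter.mp hmem).1)]
      exact (notMem_support_iff.mp hs).symm
  · rw [if_neg hd, if_neg (fun hmem => hd (Finset.mem_filter.mp hmem).2)]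

theorem coeff_pPart_of_pdvd (h : MvPolynomial σ k) {d : σ →₀ ℕ} (hd : ∀ j, p ∣ d j) :
    coeff d (pPart p h) = coeff d h := by
  classical rw [coeff_pPart, if_pos hd]

theorem coeff_pPart_of_not (h : MvPolynomial σ k) {d : σ →₀ ℕ} (hd : ¬ ∀ j, p ∣ d j) :
    coeff d (pPart p h) = 0 := by
  classical rw [coeff_pPart, if_neg hd]

open Classical in
/-- A `p`-th root of `pPart p h`. -/
noncomputable def pRoot (p : ℕ) (h : MvPolynomial σ k) [ExpChar k p] : MvPolynomial σ k :=
  ∑ d ∈ h.support.filter (fun d => ∀ j, p ∣ d j),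
    monomial (d.mapRange (· / p) (Nat.zero_div p)) ((frobeniusEquiv k p).symm (coeff d h))

open Classical in
theorem pRoot_pow (h : MvPolynomial σ k) : pRoot p h ^ p = pPart p h := by
  have : pRoot p h ^ p = frobenius (MvPolynomial σ k) p (pRoot p h) := rfl
  rw [this, pRoot, map_sum, pPart]
  refine Finset.sum_congr rfl fun d hd => ?_
  rw [frobenius_def, monomial_pow, frobeniusEquiv_symm_pow_p]
  have hsmul : p • (d.mapRange (· / p) (Nat.zero_div p)) = d := by
    ext j
    have hdvd : p ∣ d j := (Finset.mem_filter.mp hd).2 j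
    simp only [Finsupp.smul_apply, Finsupp.mapRange_apply, smul_eq_mul]
    exact Nat.mul_div_cancel' hdvd
  rw [hsmul]

open Classical in
theorem totalDegree_pRoot (h : MvPolynomial σ k) :
    (pRoot p h).totalDegree ≤ (pPart p h).totalDegree / p := by
  rw [pRoot]
  refine (totalDegree_finset_sum _ _).trans (Finset.sup_le fun d hd => ?_)
  refine (totalDegree_monomial_le _ _).trans ?_
  simp only [Function.id_def]
  have hdvd : ∀ j, p ∣ d j := (Finset.mem_filter.mp hd).2
  have hsum : (d.mapRange (· / p) (Nat.zero_div p)).sum (fun _ e => e)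
      = (d.sum fun _ e => e) / p := by
    rw [Finsupp.sum_mapRange_index (fun _ => rfl)]
    have h2 : (d.sum fun _ e => e) = p * d.sum fun _ e => e / p := by
      rw [Finsupp.mul_sum]
      exact Finsupp.sum_congr fun j _ => (Nat.mul_div_cancel' (hdvd j)).symm
    rw [h2, Nat.mul_div_cancel_left _ hp.out.pos]
  rw [hsum]
  apply Nat.div_le_div_right
  apply le_totalDegree
  rw [mem_support_iff, coeff_pPart_of_pdvd h hdvd]
  exact mem_support_iff.mp (Finset.mem_filter.mp hd).1

theorem pPart_between (h : MvPolynomial σ k) :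
    pPart p (h - pPart p h + pRoot p h) = pPart p (pRoot p h) := by
  apply MvPolynomial.ext; intro d
  by_cases hd : ∀ j, p ∣ d j
  · rw [coeff_pPart_of_pdvd _ hd, coeff_pPart_of_pdvd _ hd, coeff_add, coeff_sub,
      coeff_pPart_of_pdvd _ hd, sub_self, zero_add]
  · rw [coeff_pPart_of_not _ hd, coeff_pPart_of_not _ hd]

theorem totalDegree_pPart_le (h : MvPolynomial σ k) :
    (pPart p h).totalDegree ≤ h.totalDegree := by
  rw [totalDegree, totalDegree]
  apply Finset.sup_mono
  intro d hd
  rw [mem_support_iff] at hd ⊢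
  intro hc
  by_cases hdvd : ∀ j, p ∣ d j
  · rw [coeff_pPart_of_pdvd _ hdvd, hc] at hd; exact hd rfl
  · rw [coeff_pPart_of_not _ hdvd] at hd; exact hd rfl

/-- Base case: only the constant monomial can be a `p`-th power monomial of `h`. -/
theorem poly_base (h : MvPolynomial σ k) (h0 : (pPart p h).totalDegree = 0) :
    ∃ u : MvPolynomial σ k, ∀ d : σ →₀ ℕ, (∀ j, p ∣ d j) →
      coeff d (h + u - u ^ p) = 0 := by
  have hnc : ∀ d : σ →₀ ℕ, (∀ j, p ∣ d j) → d ≠ 0 → coeff d h = 0 := by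
    intro d hdvd hne
    by_contra hc
    have hmem : d ∈ (pPart p h).support := by
      rw [mem_support_iff, coeff_pPart_of_pdvd _ hdvd]; exact hc
    have hle := le_totalDegree hmem
    rw [h0, Nat.le_zero] at hle
    apply hne
    ext j
    rcases Finset.sum_eq_zero_iff.mp hle j with hj
    by_cases hjs : j ∈ d.support
    · exact hj hjs
    · exact Finsupp.notMem_support_iff.mp hjs
  classical
  -- solve `a ^ p - a = coeff 0 h` in `k`
  obtain ⟨a, ha⟩ : ∃ a : k, a ^ p - a - coeff 0 h = 0 := by
    set γ : k := coeff 0 h with hγ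
    have hlt : (Polynomial.X + Polynomial.C γ).degree
        < ((Polynomial.X : Polynomial k) ^ p).degree := by
      rw [Polynomial.degree_X_pow]
      calc (Polynomial.X + Polynomial.C γ).degree ≤ 1 :=
            Polynomial.degree_add_le_of_degree_le Polynomial.degree_X_le
              ((Polynomial.degree_C_le).trans (by norm_num))
        _ < (p : WithBot ℕ) := by
            exact_mod_cast Nat.one_lt_cast.mpr hp.out.one_lt
    have hdeg : (Polynomial.X ^ p - (Polynomial.X + Polynomial.C γ)).degree ≠ 0 := by
      rw [Polynomial.degree_sub_eq_left_of_degree_lt hlt, Polynomial.degree_X_pow]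
      exact_mod_cast (Nat.cast_ne_zero (R := WithBot ℕ)).mpr hp.out.ne_zero
    obtain ⟨a, ha⟩ := IsAlgClosed.exists_root
      (Polynomial.X ^ p - (Polynomial.X + Polynomial.C γ)) hdeg
    refine ⟨a, ?_⟩
    have h3 : a ^ p - (a + γ) = 0 := by
      simpa only [Polynomial.IsRoot, Polynomial.eval_sub, Polynomial.eval_pow,
        Polynomial.eval_X, Polynomial.eval_add, Polynomial.eval_C] using ha
    linear_combination h3
  refine ⟨C a, fun d hdvd => ?_⟩
  rw [← map_pow, coeff_sub, coeff_add, coeff_C, coeff_C]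
  by_cases hd : d = 0
  · rw [if_pos hd.symm, if_pos hd.symm, hd]
    linear_combination - ha
  · rw [if_neg (fun hh => hd hh.symm), if_neg (fun hh => hd hh.symm),
      hnc d hdvd hd, add_zero, sub_zero]

theorem poly_main (h : MvPolynomial σ k) :
    ∃ u : MvPolynomial σ k, ∀ d : σ →₀ ℕ, (∀ j, p ∣ d j) →
      coeff d (h + u - u ^ p) = 0 := by
  obtain ⟨N, hN⟩ : ∃ N, (pPart p h).totalDegree ≤ N := ⟨_, le_rfl⟩
  induction N generalizing h with
  | zero => exact poly_base h (Nat.le_zero.mp hN)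
  | succ N ih =>
    by_cases h0 : (pPart p h).totalDegree = 0
    · exact poly_base h h0
    · set e := pRoot p h with he
      set h' := h - pPart p h + e with hh'
      have hdeg' : (pPart p h').totalDegree ≤ N := by
        rw [hh', pPart_between]
        calc (pPart p e).totalDegree ≤ e.totalDegree := totalDegree_pPart_le e
          _ ≤ (pPart p h).totalDegree / p := totalDegree_pRoot h
          _ ≤ N := by
              have hlt : (pPart p h).totalDegree / p < (pPart p h).totalDegree :=
                Nat.div_lt_self (Nat.pos_of_ne_zero h0) hp.out.one_lt
              omega
      obtain ⟨u', hu'⟩ := ih h' hdeg'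
      refine ⟨e + u', fun d hdvd => ?_⟩
      have hpow : (e + u') ^ p = e ^ p + u' ^ p := add_pow_char _ _ _
      have hrw : h + (e + u') - (e + u') ^ p = h' + u' - u' ^ p := by
        rw [hpow, pRoot_pow, hh']
        ring
      rw [hrw]
      exact hu' d hdvd


variable {σ : Type*} {k : Type*} [Field k] [IsAlgClosed k] [CharP k p] [ExpChar k p]


theorem witt_main (m : ℕ) (f : WittVector p (MvPolynomial σ k)) :
    ∃ g : WittVector p (MvPolynomial σ k), ∀ i < m, ∀ d : σ →₀ ℕ, (∀ j, p ∣ d j) →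
      coeff d ((f + g - WittVector.frobenius g).coeff i) = 0 := by
  induction m with
  | zero => exact ⟨0, fun i hi => absurd hi (Nat.not_lt_zero i)⟩
  | succ m ih =>
    obtain ⟨g, hg⟩ := ih
    set h : WittVector p (MvPolynomial σ k) := f + g - WittVector.frobenius g with hh
    obtain ⟨u, hu⟩ := poly_main (p := p) (h.coeff m)
    set c : WittVector p (MvPolynomial σ k) :=
      WittVector.verschiebung^[m] (WittVector.teichmuller p u) with hc
    have hfrobc : WittVector.frobenius c
        = WittVector.verschiebung^[m] (WittVector.teichmuller p (u ^ p)) := by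
      apply WittVector.ext; intro i
      rw [WittVector.coeff_frobenius_charP, hc, coeff_iterate_teichmuller,
        coeff_iterate_teichmuller]
      split_ifs
      · rfl
      · exact zero_pow hp.out.ne_zero
    set y : WittVector p (MvPolynomial σ k) := c - WittVector.frobenius c with hy
    have hyV : y = WittVector.verschiebung^[m]
        (WittVector.teichmuller p u - WittVector.teichmuller p (u ^ p)) := by
      rw [hy, hfrobc, iterate_verschiebung_sub]
    have hylow : ∀ j < m, y.coeff j = 0 := by
      intro j hj; rw [hyV]; exact iterate_verschiebung_coeff_lt _ m j hj
    have hym : y.coeff m = u - u ^ p := by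
      rw [hyV]
      have h0 := WittVector.iterate_verschiebung_coeff
        (x := WittVector.teichmuller p u - WittVector.teichmuller p (u ^ p)) m 0
      rw [zero_add] at h0
      rw [h0]
      have : ∀ z : WittVector p (MvPolynomial σ k), z.coeff 0 = WittVector.constantCoeff z :=
        fun z => rfl
      rw [this, map_sub]
      simp only [WittVector.constantCoeff_apply, WittVector.teichmuller_coeff_zero]
    refine ⟨g + c, fun i hi d hdvd => ?_⟩
    have hrw : f + (g + c) - WittVector.frobenius (g + c) = h + y := by
      rw [map_add, hh, hy]; ring
    rw [hrw]
    have hi' : i ≤ m := Nat.lt_succ_iff.mp hi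
    rw [coeff_add_low m h y hylow hi']
    rcases Nat.lt_or_ge i m with him | him
    · rw [hylow i him, add_zero]
      exact hg i him d hdvd
    · have : i = m := le_antisymm hi' him
      subst this
      rw [hym]
      have : h.coeff i + (u - u ^ p) = h.coeff i + u - u ^ p := by ring
      rw [this]
      exact hu d hdvd

end WittAux

/-- **Eliminating `p`-th power monomials from Witt vectors of polynomials.** Let `k` be an
algebraically closed field of characteristic `p` and `A = k[x_0, …, x_n]`. For every truncated
Witt vector `f ∈ W_{r+1}(A)` there exists `g ∈ W_{r+1}(A)` such that every Witt component of
`f + g - F g` has zero coefficient at every `p`-th power monomial (including the constant one). -/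
theorem exists_wittVector_no_pth_power_monomials
    (p : ℕ) [Fact p.Prime] (k : Type*) [Field k] [IsAlgClosed k] [CharP k p]
    (n r : ℕ) (f : TruncatedWittVector p (r + 1) (MvPolynomial (Fin (n + 1)) k)) :
    ∃ g : TruncatedWittVector p (r + 1) (MvPolynomial (Fin (n + 1)) k),
      ∀ (i : Fin (r + 1)) (d : Fin (n + 1) →₀ ℕ), (∀ j, p ∣ d j) →
        MvPolynomial.coeff d
          (TruncatedWittVector.coeff i (f + g - truncatedWittFrobenius p (r + 1) g)) = 0 := by
  haveI : ExpChar k p := ExpChar.prime Fact.out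
  let fh : WittVector p (MvPolynomial (Fin (n + 1)) k) :=
    WittVector.mk p fun i => if h : i < r + 1 then f.coeff ⟨i, h⟩ else 0
  obtain ⟨gh, hgh⟩ := WittAux.witt_main (r + 1) fh
  refine ⟨WittVector.truncate (r + 1) gh, fun i d hdvd => ?_⟩
  have hf : WittVector.truncate (r + 1) fh = f := by
    apply TruncatedWittVector.ext; intro i
    rw [WittVector.coeff_truncate]
    show (if h : (i : ℕ) < r + 1 then f.coeff ⟨i, h⟩ else 0) = f.coeff i
    rw [dif_pos i.isLt]
  have hF : WittVector.truncate (r + 1) (WittVector.frobenius gh)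
      = truncatedWittFrobenius p (r + 1) (WittVector.truncate (r + 1) gh) := by
    apply TruncatedWittVector.ext; intro i
    rw [truncatedWittFrobenius, TruncatedWittVector.coeff_mk, WittVector.coeff_truncate,
      WittVector.coeff_truncate, WittVector.coeff_frobenius_charP]
  have hmain : f + WittVector.truncate (r + 1) gh
      - truncatedWittFrobenius p (r + 1) (WittVector.truncate (r + 1) gh)
      = WittVector.truncate (r + 1) (fh + gh - WittVector.frobenius gh) := by
    rw [map_sub, map_add, hf, hF]
  rw [hmain, WittVector.coeff_truncate]
  exact hgh i i.isLt d hdvd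
end

section
/- Let p be a prime and let k be an algebraically closed field of characteristic p. For every polynomial u ∈ k[x_0, …, x_n] there exists a polynomial v ∈ k[x_0, …, x_n] such that u + v − v^p has zero coefficient at every p-th power monomial; that is, for every exponent vector d ∈ ℕ^{n+1} with all entries divisible by p (including d = 0), the coefficient of x^d in u + v − v^p is zero. -/
open MvPolynomial

section Aux

attribute [local instance] Classical.propDecidable

variable (p : ℕ) [hpF : Fact p.Prime] {k : Type*} [Field k] [IsAlgClosed k] [CharP k p]
  {σ : Type*}

open Classical in
/-- The "descent" operator: picks out the nonconstant `p`-th power monomials of `w`,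
takes `p`-th roots of exponents and coefficients. -/
noncomputable def phiAux (w : MvPolynomial σ k) : MvPolynomial σ k :=
  ∑ d ∈ w.support, if d ≠ 0 ∧ ∀ j, p ∣ d j then
    monomial (d.mapRange (· / p) (Nat.zero_div p)) ((frobeniusEquiv k p).symm (coeff d w))
  else 0

lemma mapRange_div_eq_iff {e d : σ →₀ ℕ} (hd : ∀ j, p ∣ d j) :
    d.mapRange (· / p) (Nat.zero_div p) = e ↔ d = p • e := by
  have hp0 : 0 < p := hpF.out.pos
  constructor
  · intro h
    ext j
    have hj : d j / p = e j := by
      have := congrArg (fun f => f j) h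
      simpa [Finsupp.mapRange_apply] using this
    rw [Finsupp.smul_apply, smul_eq_mul, ← hj, Nat.mul_div_cancel' (hd j)]
  · rintro rfl
    ext j
    simp [Finsupp.mapRange_apply, Finsupp.smul_apply, smul_eq_mul,
      Nat.mul_div_cancel_left _ hp0]

lemma smul_ne_zero_of_ne_zero {e : σ →₀ ℕ} (he : e ≠ 0) : p • e ≠ 0 := by
  have hp0 : 0 < p := hpF.out.pos
  intro h
  apply he
  ext j
  have := congrArg (fun f => f j) h
  simp only [Finsupp.smul_apply, smul_eq_mul, Finsupp.coe_zero, Pi.zero_apply] at this ⊢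
  simpa [Nat.mul_eq_zero, hp0.ne'] using this

lemma coeff_phiAux (w : MvPolynomial σ k) (e : σ →₀ ℕ) :
    coeff e (phiAux p w) =
      if e = 0 then 0 else (frobeniusEquiv k p).symm (coeff (p • e) w) := by
  classical
  rw [phiAux, coeff_sum]
  by_cases he : e = 0
  · rw [if_pos he]
    apply Finset.sum_eq_zero
    intro d _
    split_ifs with h
    · rw [coeff_monomial, if_neg]
      intro heq
      exact h.1 (by simpa [he, smul_zero] using (mapRange_div_eq_iff p h.2).1 heq)
    · exact coeff_zero _
  · rw [if_neg he]
    by_cases hm : p • e ∈ w.support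
    · rw [Finset.sum_eq_single (p • e)]
      · have h1 : p • e ≠ 0 ∧ ∀ j, p ∣ (p • e) j :=
          ⟨smul_ne_zero_of_ne_zero p he, fun j => ⟨e j, by
            simp [Finsupp.smul_apply, smul_eq_mul]⟩⟩
        rw [if_pos h1, coeff_monomial, if_pos ((mapRange_div_eq_iff p h1.2).2 rfl)]
      · intro d _ hne
        split_ifs with h
        · rw [coeff_monomial, if_neg]
          intro heq
          exact hne ((mapRange_div_eq_iff p h.2).1 heq)
        · exact coeff_zero _
      · intro h
        exact absurd hm h
    · have h0 : coeff (p • e) w = 0 := notMem_support_iff.mp hm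
      rw [h0, map_zero]
      apply Finset.sum_eq_zero
      intro d hd
      split_ifs with h
      · rw [coeff_monomial, if_neg]
        intro heq
        exact hm (((mapRange_div_eq_iff p h.2).1 heq) ▸ hd)
      · exact coeff_zero _

lemma support_phiAux {w : MvPolynomial σ k} {e : σ →₀ ℕ} (he : e ∈ (phiAux p w).support) :
    e ≠ 0 ∧ p • e ∈ w.support := by
  rw [mem_support_iff, coeff_phiAux] at he
  split_ifs at he with h
  · exact absurd rfl he
  · refine ⟨h, mem_support_iff.mpr fun hc => he (by rw [hc, map_zero])⟩

lemma sum_smul_exponents (e : σ →₀ ℕ) :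
    ((p • e).sum fun _ x => x) = p * e.sum fun _ x => x := by
  rw [Finsupp.sum_smul_index fun _ => rfl, Finsupp.mul_sum]

lemma phiAux_iterate_eq_zero (m : ℕ) :
    ∀ w : MvPolynomial σ k, w.totalDegree ≤ m → (phiAux p)^[m + 1] w = 0 := by
  have hp2 : 2 ≤ p := hpF.out.two_le
  induction m with
  | zero =>
    intro w hw
    rw [Function.iterate_one]
    ext e
    rw [coeff_phiAux, coeff_zero]
    split_ifs with h
    · rfl
    · have hsum : 1 ≤ e.sum fun _ x => x := by
        obtain ⟨j, hj⟩ := Finsupp.ne_iff.mp h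
        simp only [Finsupp.coe_zero, Pi.zero_apply] at hj
        calc 1 ≤ e j := by omega
        _ ≤ e.sum fun _ x => x :=
          Finset.single_le_sum (fun _ _ => Nat.zero_le _) (Finsupp.mem_support_iff.mpr hj)
      have : coeff (p • e) w = 0 := by
        apply coeff_eq_zero_of_totalDegree_lt
        calc w.totalDegree ≤ 0 := hw
        _ < ((p • e).sum fun _ x => x) := by
            rw [sum_smul_exponents]; nlinarith
        _ = ∑ i ∈ (p • e).support, (p • e) i := rfl
      rw [this, map_zero]
  | succ m ih =>
    intro w hw
    rw [Function.iterate_succ_apply]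
    apply ih
    apply Finset.sup_le
    intro e he
    obtain ⟨he0, hmem⟩ := support_phiAux p he
    have h1 : ((p • e).sum fun _ x => x) ≤ w.totalDegree := le_totalDegree hmem
    rw [sum_smul_exponents] at h1
    have hsum : 1 ≤ e.sum fun _ x => x := by
      obtain ⟨j, hj⟩ := Finsupp.ne_iff.mp he0
      simp only [Finsupp.coe_zero, Pi.zero_apply] at hj
      calc 1 ≤ e j := by omega
      _ ≤ e.sum fun _ x => x :=
        Finset.single_le_sum (fun _ _ => Nat.zero_le _) (Finsupp.mem_support_iff.mpr hj)
    have := hw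
    nlinarith

lemma coeff_pow_char (w : MvPolynomial σ k) (e : σ →₀ ℕ) :
    coeff (p • e) (w ^ p) = coeff e w ^ p := by
  classical
  have hp0 : 0 < p := hpF.out.pos
  have hsmul_inj : ∀ d d' : σ →₀ ℕ, p • d = p • d' → d = d' := by
    intro d d' h
    ext j
    have := congrArg (fun f => f j) h
    simp only [Finsupp.smul_apply, smul_eq_mul] at this
    exact Nat.eq_of_mul_eq_mul_left hp0 this
  calc coeff (p • e) (w ^ p)
      = coeff (p • e) (frobenius (MvPolynomial σ k) p w) := by rw [frobenius_def]
    _ = coeff (p • e) (∑ d ∈ w.support, monomial (p • d) (coeff d w ^ p)) := by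
        conv_lhs => rw [w.as_sum, map_sum]
        congr 1
        refine Finset.sum_congr rfl fun d _ => ?_
        rw [frobenius_def, monomial_pow]
    _ = coeff e w ^ p := by
        rw [coeff_sum]
        by_cases hm : e ∈ w.support
        · rw [Finset.sum_eq_single e]
          · rw [coeff_monomial, if_pos rfl]
          · intro d _ hne
            rw [coeff_monomial, if_neg fun h => hne (hsmul_inj _ _ h)]
          · intro h; exact absurd hm h
        · have h0 : coeff e w = 0 := notMem_support_iff.mp hm
          rw [h0, zero_pow hp0.ne']
          apply Finset.sum_eq_zero
          intro d hd
          rw [coeff_monomial, if_neg]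
          intro h
          exact hm ((hsmul_inj _ _ h) ▸ hd)

end Aux

/-- **Eliminating `p`-th power monomials, rank-one case.** Let `k` be an algebraically closed
field of characteristic `p`. For every `u ∈ k[x_0, …, x_n]` there exists `v ∈ k[x_0, …, x_n]`
such that `u + v - v ^ p` has zero coefficient at every `p`-th power monomial (including the
constant monomial). -/
theorem exists_no_pth_power_monomials
    (p : ℕ) (hp : p.Prime) (k : Type*) [Field k] [IsAlgClosed k] [CharP k p]
    (n : ℕ) (u : MvPolynomial (Fin (n + 1)) k) :
    ∃ v : MvPolynomial (Fin (n + 1)) k,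
      ∀ d : Fin (n + 1) →₀ ℕ, (∀ j, p ∣ d j) →
        MvPolynomial.coeff d (u + v - v ^ p) = 0 := by
  classical
  haveI : Fact p.Prime := ⟨hp⟩
  set N := u.totalDegree + 1 with hN
  set v' : MvPolynomial (Fin (n + 1)) k := ∑ i ∈ Finset.range N, (phiAux p)^[i + 1] u with hv'
  obtain ⟨z, hz⟩ : ∃ z : k, z ^ p - z = coeff 0 (u + v' - v' ^ p) := by
    set c := coeff 0 (u + v' - v' ^ p)
    have hdeg : (Polynomial.X ^ p - (Polynomial.X + Polynomial.C c) : Polynomial k).degree ≠ 0 := by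
      rw [Polynomial.degree_sub_eq_left_of_degree_lt, Polynomial.degree_X_pow]
      · exact_mod_cast hp.ne_zero
      · rw [Polynomial.degree_X_pow]
        calc (Polynomial.X + Polynomial.C c : Polynomial k).degree ≤ 1 := by
              apply Polynomial.degree_add_le_of_degree_le
              · exact Polynomial.degree_X_le
              · exact (Polynomial.degree_C_le).trans (by norm_num)
          _ < (p : WithBot ℕ) := by exact_mod_cast Nat.one_lt_cast.mpr hp.one_lt
    obtain ⟨z, hz⟩ := IsAlgClosed.exists_root _ hdeg
    refine ⟨z, ?_⟩
    have := hz
    simp only [Polynomial.IsRoot, Polynomial.eval_sub, Polynomial.eval_add, Polynomial.eval_pow,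
      Polynomial.eval_X, Polynomial.eval_C, sub_eq_zero] at this
    rw [this]
    ring
  refine ⟨v' + C z, ?_⟩
  intro d hd
  have hfr : (v' + C z) ^ p = v' ^ p + C (z ^ p) := by
    have := map_add (frobenius (MvPolynomial (Fin (n + 1)) k) p) v' (C z)
    simp only [frobenius_def] at this
    rw [this, ← C_pow]
  have hsplit : u + (v' + C z) - (v' + C z) ^ p = (u + v' - v' ^ p) + C (z - z ^ p) := by
    rw [hfr, map_sub]; ring
  rw [hsplit, coeff_add]
  by_cases hd0 : d = 0
  · subst hd0
    rw [coeff_zero_C, ← hz]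
    ring
  · have hcC : coeff d (C (z - z ^ p)) = 0 := by
      rw [coeff_C, if_neg fun h => hd0 h.symm]
    rw [hcC, add_zero]
    set e : Fin (n + 1) →₀ ℕ := d.mapRange (· / p) (Nat.zero_div p) with he
    have hde : d = p • e := (mapRange_div_eq_iff p hd).1 rfl
    have he0 : e ≠ 0 := by
      intro h
      apply hd0
      rw [hde, h, smul_zero]
    have hzero : coeff (p • e) ((phiAux p)^[N] u) = 0 := by
      rw [hN, phiAux_iterate_eq_zero p u.totalDegree u le_rfl, coeff_zero]
    have hv'e : coeff e v' =
        ∑ i ∈ Finset.range N, (frobeniusEquiv k p).symm (coeff (p • e) ((phiAux p)^[i] u)) := by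
      rw [hv', coeff_sum]
      refine Finset.sum_congr rfl fun i _ => ?_
      rw [Function.iterate_succ_apply', coeff_phiAux, if_neg he0]
    have hpow : coeff e v' ^ p = ∑ i ∈ Finset.range N, coeff (p • e) ((phiAux p)^[i] u) := by
      rw [hv'e, ← frobenius_def, map_sum]
      exact Finset.sum_congr rfl fun i _ => frobenius_apply_frobeniusEquiv_symm k p _
    have hv'pe : coeff (p • e) v' =
        ∑ i ∈ Finset.range N, coeff (p • e) ((phiAux p)^[i + 1] u) := by
      rw [hv', coeff_sum]
    rw [coeff_sub, coeff_add, hde, coeff_pow_char, hpow, hv'pe]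
    have h1 := Finset.sum_range_succ' (fun i => coeff (p • e) ((phiAux p)^[i] u)) N
    have h2 := Finset.sum_range_succ (fun i => coeff (p • e) ((phiAux p)^[i] u)) N
    simp only [Function.iterate_zero_apply] at h1
    rw [h2, hzero, add_zero] at h1
    linear_combination -h1
end

section
/- Let p and ℓ be distinct primes, let G be a finite group of p-power order, and let ρ be a representation of G on a finite-dimensional vector space M over the field 𝔽_ℓ = ZMod ℓ. Then dim_{𝔽_ℓ}(M / M^G) = dim_{𝔽_ℓ}(M^∨ / (M^∨)^G), where M^G denotes the subspace of G-invariant vectors, M^∨ denotes the dual space with the contragredient (dual) G-action, and (M^∨)^G its invariants. -/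
open Module LinearMap

/-- Range of a projection onto a submodule is that submodule. -/
lemma IsProj_range {R M : Type*} [CommRing R] [AddCommGroup M] [Module R M]
    {q : Submodule R M} {f : M →ₗ[R] M} (h : LinearMap.IsProj q f) :
    LinearMap.range f = q := by
  apply le_antisymm
  · rintro x ⟨y, rfl⟩; exact h.map_mem y
  · intro x hx; exact ⟨x, h.map_id x hx⟩

lemma averageMap_eq {k G V : Type*} [CommRing k] [Group G] [AddCommGroup V] [Module k V]
    [Fintype G] [Invertible (Fintype.card G : k)] (ρ : Representation k G V) :
    ρ.averageMap = ⅟(Fintype.card G : k) • ∑ g : G, (ρ g : V →ₗ[k] V) := by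
  simp only [Representation.averageMap, GroupAlgebra.average, map_smul, map_sum,
    Representation.asAlgebraHom_of]

lemma averageMap_dual {k G V : Type*} [CommRing k] [Group G] [AddCommGroup V] [Module k V]
    [Fintype G] [Invertible (Fintype.card G : k)] (ρ : Representation k G V) :
    ρ.dual.averageMap = ρ.averageMap.dualMap := by
  rw [averageMap_eq, averageMap_eq]
  have : ∑ g : G, (ρ.dual g : Module.Dual k V →ₗ[k] Module.Dual k V)
      = ∑ g : G, (ρ g).dualMap := by
    rw [← Equiv.sum_comp (Equiv.inv G)]
    refine Finset.sum_congr rfl fun g _ => ?_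
    rw [Representation.dual_apply]
    simp only [Equiv.inv_apply, inv_inv]
    ext f v
    rfl
  rw [this]
  ext f v
  simp [Finset.sum_apply]

/-- **Coinvariant dimensions of a `p`-group representation and its dual agree.** Let `p ≠ ℓ` be
primes, `G` a finite `p`-group, and `ρ` a representation of `G` on a finite-dimensional
`𝔽_ℓ`-vector space `M`. Then `dim (M / M^G) = dim (M^∨ / (M^∨)^G)`. -/
theorem finrank_quotient_invariants_eq_dual
    (p ℓ : ℕ) [Fact p.Prime] [Fact ℓ.Prime] (hpl : p ≠ ℓ)
    (G : Type*) [Group G] [Finite G] (hG : IsPGroup p G)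
    (M : Type*) [AddCommGroup M] [Module (ZMod ℓ) M] [FiniteDimensional (ZMod ℓ) M]
    (ρ : Representation (ZMod ℓ) G M) :
    Module.finrank (ZMod ℓ) (M ⧸ ρ.invariants) =
      Module.finrank (ZMod ℓ) (Module.Dual (ZMod ℓ) M ⧸ ρ.dual.invariants) := by
  have : Fintype G := Fintype.ofFinite G
  have hcard : (Fintype.card G : ZMod ℓ) ≠ 0 := by
    obtain ⟨n, hn⟩ := IsPGroup.iff_card.mp hG
    rw [← Nat.card_eq_fintype_card, hn]
    push_cast
    apply pow_ne_zero
    rw [Ne, ZMod.natCast_eq_zero_iff]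
    intro hdvd
    exact hpl (((Fact.out : p.Prime).eq_one_or_self_of_dvd ℓ hdvd).resolve_left
      (Fact.out : ℓ.Prime).ne_one).symm
  have : Invertible (Fintype.card G : ZMod ℓ) := invertibleOfNonzero hcard
  have hinv : Module.finrank (ZMod ℓ) ρ.invariants
      = Module.finrank (ZMod ℓ) ρ.dual.invariants := by
    rw [← IsProj_range ρ.isProj_averageMap, ← IsProj_range ρ.dual.isProj_averageMap,
      averageMap_dual]
    exact (LinearMap.finrank_range_dualMap_eq_finrank_range ρ.averageMap).symm
  have h1 := Submodule.finrank_quotient_add_finrank ρ.invariants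
  have h2 := Submodule.finrank_quotient_add_finrank ρ.dual.invariants
  have h3 : Module.finrank (ZMod ℓ) (Module.Dual (ZMod ℓ) M) = Module.finrank (ZMod ℓ) M :=
    Subspace.dual_finrank_eq
  omega
end

section
/- Let p be a prime, let A be a commutative ring of characteristic p (an algebra over 𝔽_p = ZMod p), and let r ≥ 0. Define a map F^r d : W_{r+1}(A) → Ω¹_{A/𝔽_p} from truncated Witt vectors of length r+1 to the module of Kähler differentials by F^r d(f) = Σ_{i=0}^{r} f_i^{p^{r−i}−1} · d(f_i), where f_0, …, f_r are the Witt components of f and d is the universal derivation. Then F^r d is additive: F^r d(f + g) = F^r d(f) + F^r d(g) for all f, g ∈ W_{r+1}(A). -/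
/-!
Differentiating the ghost component `w_r(x) = ∑ p^i x_i^{p^{r-i}}` gives `d(w_r x) = p^r • F^r d(x)`,
and `w_r` is additive, so `p^r • F^r d` is additive. For the generic pair of Witt vectors over
`ℤ[X_{0,i}, X_{1,i}]` the module of differentials is free, so `p^r` can be cancelled; the identity
then specialises to any `x, y` along the classifying map, and to any derivation through `Ω`.
-/

/-- The de Rham–Witt map `F^r d : W_{r+1}(A) → Ω¹_{A/𝔽_p}`,
`f ↦ ∑_{i=0}^{r} f_i ^ (p^{r-i} - 1) • d f_i`. -/
noncomputable def FrD (p : ℕ) [Fact p.Prime] (A : Type*) [CommRing A] [Algebra (ZMod p) A]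
    (r : ℕ) (f : TruncatedWittVector p (r + 1) A) : KaehlerDifferential (ZMod p) A :=
  ∑ i : Fin (r + 1),
    TruncatedWittVector.coeff i f ^ (p ^ (r - (i : ℕ)) - 1) •
      KaehlerDifferential.D (ZMod p) A (TruncatedWittVector.coeff i f)

open MvPolynomial Finset

instance {σ : Type*} : IsAddTorsionFree Ω[MvPolynomial σ ℤ⁄ℤ] :=
  have := (KaehlerDifferential.mvPolynomialBasis ℤ σ).isTorsionFree
  .of_isTorsionFree (MvPolynomial σ ℤ) _

namespace WittVector

variable {p : ℕ} {k A M : Type*} [CommRing k] [CommRing A] [Algebra k A]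
  [AddCommGroup M] [Module A M] [Module k M]

def frD (D : Derivation k A M) (r : ℕ) (x : WittVector p A) : M :=
  ∑ i ∈ range (r + 1), x.coeff i ^ (p ^ (r - i) - 1) • D (x.coeff i)

theorem frD_compDer [IsScalarTower k A M] {N : Type*} [AddCommGroup N] [Module A N] [Module k N]
    [IsScalarTower k A N] (L : M →ₗ[A] N) (D : Derivation k A M) (r : ℕ) (x : WittVector p A) :
    frD (L.compDer D) r x = L (frD D r x) := by
  simp [frD]

variable [Fact p.Prime]

theorem map_frD {R : Type*} [CommRing R] [Algebra R A] (r : ℕ) (x : WittVector p R) :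
    KaehlerDifferential.map ℤ ℤ R A (frD (KaehlerDifferential.D ℤ R) r x) =
      frD (KaehlerDifferential.D ℤ A) r (map (algebraMap R A) x) := by
  simp [frD, ← algebraMap_smul A]

theorem derivation_ghostComponent (D : Derivation k A M) (r : ℕ) (x : WittVector p A) :
    D (ghostComponent r x) = p ^ r • frD D r x := by
  rw [ghostComponent_apply, aeval_wittPolynomial, map_sum, frD, smul_sum]
  refine sum_congr rfl fun i hi => ?_
  have hir : i ≤ r := Nat.lt_succ_iff.mp (mem_range.mp hi)
  rw [Derivation.leibniz, Derivation.leibniz_pow, ← Nat.cast_pow, D.map_natCast, smul_zero,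
    add_zero, Nat.cast_smul_eq_nsmul, smul_smul, ← pow_add, Nat.add_sub_cancel' hir]

theorem frD_add_of_isAddTorsionFree [IsAddTorsionFree M] (D : Derivation k A M) (r : ℕ)
    (x y : WittVector p A) : frD D r (x + y) = frD D r x + frD D r y := by
  have hp : p ^ r ≠ 0 := pow_ne_zero r (Fact.out : p.Prime).ne_zero
  apply IsAddTorsionFree.nsmul_right_injective hp
  simp only [smul_add, ← derivation_ghostComponent, map_add]

theorem frD_kaehlerD_add (r : ℕ) (x y : WittVector p A) :
    frD (KaehlerDifferential.D ℤ A) r (x + y) =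
      frD (KaehlerDifferential.D ℤ A) r x + frD (KaehlerDifferential.D ℤ A) r y := by
  let φ : MvPolynomial (Fin 2 × ℕ) ℤ →+* A :=
    (aeval (Function.uncurry ![x.coeff, y.coeff])).toRingHom
  let := φ.toAlgebra
  let X₀ : WittVector p (MvPolynomial (Fin 2 × ℕ) ℤ) := mk p fun i => X (0, i)
  let X₁ : WittVector p (MvPolynomial (Fin 2 × ℕ) ℤ) := mk p fun i => X (1, i)
  have hx : map (algebraMap _ A) X₀ = x := by
    ext i; simp [X₀, φ, map_coeff, RingHom.algebraMap_toAlgebra]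
  have hy : map (algebraMap _ A) X₁ = y := by
    ext i; simp [X₁, φ, map_coeff, RingHom.algebraMap_toAlgebra]
  have hX := frD_add_of_isAddTorsionFree (KaehlerDifferential.D ℤ _) r X₀ X₁
  rw [← hx, ← hy, ← map_add, ← map_frD, ← map_frD, ← map_frD]
  exact (congrArg _ hX).trans (map_add _ _ _)

theorem frD_add [IsScalarTower k A M] (D : Derivation k A M) (r : ℕ) (x y : WittVector p A) :
    frD D r (x + y) = frD D r x + frD D r y := by
  have h (z : WittVector p A) :
      frD D r z = (D.restrictScalars ℤ).liftKaehlerDifferential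
        (frD (KaehlerDifferential.D ℤ A) r z) := by
    rw [← frD_compDer, Derivation.liftKaehlerDifferential_comp]
    rfl
  rw [h, h, h, frD_kaehlerD_add, map_add]

end WittVector

theorem FrD_truncate (p : ℕ) [Fact p.Prime] (A : Type*) [CommRing A] [Algebra (ZMod p) A]
    (r : ℕ) (x : WittVector p A) :
    FrD p A r (WittVector.truncate (r + 1) x) =
      WittVector.frD (KaehlerDifferential.D (ZMod p) A) r x := by
  simp [FrD, WittVector.frD, ← Fin.sum_univ_eq_sum_range]

theorem FrD_add_general
    (p : ℕ) [Fact p.Prime] (A : Type*) [CommRing A] [Algebra (ZMod p) A]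
    (r : ℕ) (f g : TruncatedWittVector p (r + 1) A) :
    FrD p A r (f + g) = FrD p A r f + FrD p A r g := by
  obtain ⟨x, rfl⟩ := WittVector.truncate_surjective p (r + 1) A f
  obtain ⟨y, rfl⟩ := WittVector.truncate_surjective p (r + 1) A g
  rw [← map_add, FrD_truncate, FrD_truncate, FrD_truncate, WittVector.frD_add]

/-- **Additivity of `F^r d`.** Let `A` be a commutative ring of characteristic `p` (an algebra
over `𝔽_p`). The map `F^r d : W_{r+1}(A) → Ω¹_{A/𝔽_p}` given by
`f ↦ ∑_i f_i ^ (p^{r-i} - 1) • d f_i` (where `f_i` are the Witt components) is additive. -/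
theorem FrD_add
    (p : ℕ) [Fact p.Prime] (A : Type*) [CommRing A] [Algebra (ZMod p) A] [CharP A p]
    (r : ℕ) (f g : TruncatedWittVector p (r + 1) A) :
    FrD p A r (f + g) = FrD p A r f + FrD p A r g :=
  FrD_add_general p A r f g
end

section
/- Let k be an algebraically closed field of characteristic p > 0, let e ≥ 1 and m = p^e, and assume m > 2. Let a, b, c₁, c₂ ∈ k with (a, b) ≠ (0, 0) and a·c₁ + b·c₂ = 1. For t ∈ k define the one-variable polynomial f_t ∈ k[s] by f_t(s) = (c₁·t − b·s)^{m−1} · (c₂·t + a·s) (the restriction of the two-variable polynomial x^{m−1}y to the parametrized line x = c₁t − bs, y = c₂t + as, which lies in the fiber {ax + by = t}). Then the Artin–Schreier-reduced degrees at t = 0 and t = 1 differ: sInf { natDegree(f_0 + h^p − h) : h ∈ k[s] } ≠ sInf { natDegree(f_1 + h^p − h) : h ∈ k[s] }. -/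
/-!
In characteristic `p` the Artin–Schreier reduced degree is invariant under `f ↦ f + h^p - h`,
hence under replacing a monomial `c s^(p^e)` by `w s` with `w^(p^e) = c`; and a representative
whose degree is prime to `p` already has minimal degree. Over `0`, `f₀ = c s^m` thus reduces to
degree at most `1`. Over `1` with `b ≠ 0`, the relation `a (c₁ - b s) + b (c₂ + a s) = 1` and
`(c₁ - b s)^m = c₁^m - b^m s^m` write `f₁` as a polynomial of degree `m - 1` plus a multiple of
`s^m`, so its reduced degree is `m - 1 > 1`. If `b = 0`, then `f₀ = 0` while `f₁` is linear.
-/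

open Polynomial

noncomputable def asDeg {k : Type*} [Field k] (p : ℕ) (f : Polynomial k) : ℕ :=
  sInf { N | ∃ h : Polynomial k, (f + h ^ p - h).natDegree = N }

theorem Nat.not_dvd_pow_sub_one {p e : ℕ} (hp : 1 < p) (he : e ≠ 0) : ¬ p ∣ p ^ e - 1 := by
  intro h
  have hone : p ∣ p ^ e - (p ^ e - 1) := Nat.dvd_sub (dvd_pow_self p he) h
  rw [Nat.sub_sub_self (Nat.one_le_pow _ _ (by omega))] at hone
  exact (Nat.le_of_dvd one_pos hone).not_gt hp

section
variable {k : Type*} [Field k] {p : ℕ}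

theorem natDegree_pow_sub_self (hp : 1 < p) {h : k[X]} (hh : 0 < h.natDegree) :
    (h ^ p - h).natDegree = p * h.natDegree := by
  have hlt : h.natDegree < (h ^ p).natDegree := by
    rw [natDegree_pow]
    exact lt_mul_left hh hp
  rw [natDegree_sub_eq_left_of_natDegree_lt hlt, natDegree_pow]

theorem natDegree_le_natDegree_add_pow_sub_self (hp : 1 < p) {f : k[X]}
    (hf : ¬ p ∣ f.natDegree) (h : k[X]) : f.natDegree ≤ (f + h ^ p - h).natDegree := by
  rw [add_sub_assoc]
  rcases Nat.eq_zero_or_pos h.natDegree with hh | hh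
  · rw [eq_C_of_natDegree_eq_zero hh, ← C_pow, ← C_sub, natDegree_add_C]
  have hfh : f.natDegree ≠ (h ^ p - h).natDegree := by
    rw [natDegree_pow_sub_self hp hh]
    exact fun heq => hf (heq ▸ dvd_mul_right p _)
  rcases hfh.lt_or_gt with hlt | hlt
  · rw [natDegree_add_eq_right_of_natDegree_lt hlt]
    exact hlt.le
  · rw [natDegree_add_eq_left_of_natDegree_lt hlt]

theorem asDeg_le_natDegree (hp : p ≠ 0) (f : k[X]) : asDeg p f ≤ f.natDegree :=
  Nat.sInf_le ⟨0, by rw [zero_pow hp, add_zero, sub_zero]⟩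

theorem asDeg_eq_natDegree (hp : 1 < p) {f : k[X]} (hf : ¬ p ∣ f.natDegree) :
    asDeg p f = f.natDegree :=
  (asDeg_le_natDegree (by omega) f).antisymm <|
    le_csInf ⟨_, 0, rfl⟩ fun _ ⟨h, hN⟩ =>
      hN ▸ natDegree_le_natDegree_add_pow_sub_self hp hf h

variable [ExpChar k p]

theorem asDeg_add_pow_sub_self (f g : k[X]) : asDeg p (f + g ^ p - g) = asDeg p f := by
  unfold asDeg
  congr 1
  ext N
  constructor
  · rintro ⟨h, rfl⟩
    exact ⟨g + h, by rw [add_pow_expChar]; ring_nf⟩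
  · rintro ⟨h, rfl⟩
    exact ⟨h - g, by rw [sub_pow_expChar]; ring_nf⟩

theorem asDeg_add_pow_pow (f g : k[X]) (e : ℕ) : asDeg p (f + g ^ p ^ e) = asDeg p (f + g) := by
  induction e with
  | zero => rw [pow_zero, pow_one]
  | succ e ih =>
    rw [← ih, ← asDeg_add_pow_sub_self (f + g ^ p ^ e) (g ^ p ^ e), pow_succ, pow_mul]
    ring_nf

theorem exists_asDeg_add_C_mul_X_pow_eq [IsAlgClosed k] (f : k[X]) (c : k) (e : ℕ) :
    ∃ w : k, asDeg p (f + C c * X ^ p ^ e) = asDeg p (f + C w * X) := by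
  obtain ⟨w, hw⟩ := IsAlgClosed.exists_pow_nat_eq c (pow_pos (expChar_pos k p) e)
  exact ⟨w, by rw [← hw, C_pow, ← mul_pow, asDeg_add_pow_pow]⟩

theorem asDeg_C_mul_X_pow_le_one [IsAlgClosed k] (c : k) (e : ℕ) :
    asDeg p (C c * X ^ p ^ e) ≤ 1 := by
  obtain ⟨w, hw⟩ := exists_asDeg_add_C_mul_X_pow_eq (p := p) 0 c e
  rw [zero_add, zero_add] at hw
  rw [hw]
  exact (asDeg_le_natDegree (expChar_pos k p).ne' _).trans
    ((natDegree_C_mul_le w X).trans natDegree_X_le)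

omit [ExpChar k p] in
theorem natDegree_C_sub_C_mul_X {c b : k} (hb : b ≠ 0) : (C c - C b * X).natDegree = 1 := by
  rw [sub_eq_add_neg, add_comm, ← neg_mul, ← C_neg]
  exact natDegree_linear (neg_ne_zero.mpr hb)

theorem C_sub_C_mul_X_pow_pred_mul_eq {a b c₁ c₂ : k} (hb : b ≠ 0)
    (h1 : a * c₁ + b * c₂ = 1) (e : ℕ) :
    (C c₁ - C b * X) ^ (p ^ e - 1) * (C c₂ + C a * X) =
      C b⁻¹ * ((C c₁ - C b * X) ^ (p ^ e - 1) - C (a * c₁ ^ p ^ e)) +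
        C (a * b ^ (p ^ e - 1)) * X ^ p ^ e := by
  obtain ⟨n, hn⟩ : ∃ n, p ^ e = n + 1 :=
    Nat.exists_eq_add_one.mpr (pow_pos (expChar_pos k p) e)
  have hfrob : (C c₁ - C b * X) ^ p ^ e = C c₁ ^ p ^ e - C b ^ p ^ e * X ^ p ^ e := by
    rw [sub_pow_expChar_pow, mul_pow]
  have hlin : C a * (C c₁ - C b * X) + C b * (C c₂ + C a * X) = 1 := by
    rw [← map_one C, ← h1]; simp only [map_add, map_mul]; ring
  have hbinv : C b * C b⁻¹ = 1 := by rw [← map_mul, mul_inv_cancel₀ hb, map_one]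
  rw [hn] at hfrob ⊢
  rw [Nat.add_sub_cancel]
  simp only [map_mul, map_pow]
  apply mul_left_cancel₀ (C_ne_zero.mpr hb)
  linear_combination (C c₁ - C b * X) ^ n * hlin - C a * hfrob
    - ((C c₁ - C b * X) ^ n - C a * C c₁ ^ (n + 1)) * hbinv

theorem asDeg_C_sub_C_mul_X_pow_pred_mul [IsAlgClosed k] {a b c₁ c₂ : k} (hb : b ≠ 0)
    (h1 : a * c₁ + b * c₂ = 1) {e : ℕ} (he : 2 < p ^ e) :
    asDeg p ((C c₁ - C b * X) ^ (p ^ e - 1) * (C c₂ + C a * X)) = p ^ e - 1 := by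
  have hp : 1 < p := by
    by_contra! hp
    exact (pow_le_one₀ (n := e) (Nat.zero_le p) hp).not_gt (by omega)
  set g := C b⁻¹ * ((C c₁ - C b * X) ^ (p ^ e - 1) - C (a * c₁ ^ p ^ e))
  obtain ⟨w, hw⟩ := exists_asDeg_add_C_mul_X_pow_eq (p := p) g (a * b ^ (p ^ e - 1)) e
  have hgw : (g + C w * X).natDegree = p ^ e - 1 := by
    have hg : g.natDegree = p ^ e - 1 := by
      rw [natDegree_C_mul (inv_ne_zero hb), natDegree_sub_C, natDegree_pow,
        natDegree_C_sub_C_mul_X hb, mul_one]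
    rw [natDegree_add_eq_left_of_natDegree_lt, hg]
    exact ((natDegree_C_mul_le w X).trans natDegree_X_le).trans_lt (by omega)
  have he₀ : e ≠ 0 := by rintro rfl; rw [pow_zero] at he; omega
  rw [C_sub_C_mul_X_pow_pred_mul_eq hb h1, hw,
    asDeg_eq_natDegree hp (hgw ▸ Nat.not_dvd_pow_sub_one hp he₀), hgw]

end

theorem asDeg_fiber_zero_ne_asDeg_fiber_one_general
    (p : ℕ) [Fact p.Prime] (k : Type*) [Field k] [IsAlgClosed k] [CharP k p]
    (e m : ℕ) (hm : m = p ^ e) (hm2 : 2 < m)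
    (a b c₁ c₂ : k) (h1 : a * c₁ + b * c₂ = 1) :
    asDeg p ((C (c₁ * 0) - C b * X) ^ (m - 1) * (C (c₂ * 0) + C a * X)) ≠
      asDeg p ((C (c₁ * 1) - C b * X) ^ (m - 1) * (C (c₂ * 1) + C a * X)) := by
  subst hm
  have hp : p.Prime := Fact.out
  simp only [mul_zero, mul_one, map_zero, zero_sub, zero_add]
  apply ne_of_lt
  rcases eq_or_ne b 0 with rfl | hb
  · rw [zero_mul, add_zero] at h1
    obtain ⟨ha, hc₁⟩ := mul_ne_zero_iff.mp (h1 ▸ one_ne_zero : a * c₁ ≠ 0)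
    have hf₁ : (C c₁ ^ (p ^ e - 1) * (C c₂ + C a * X)).natDegree = 1 := by
      rw [← C_pow, natDegree_C_mul (pow_ne_zero _ hc₁), add_comm, natDegree_linear ha]
    have hasDeg₁ : asDeg p (C c₁ ^ (p ^ e - 1) * (C c₂ + C a * X)) = 1 := by
      rw [asDeg_eq_natDegree hp.one_lt, hf₁]
      rw [hf₁]
      exact hp.not_dvd_one
    simp only [map_zero, zero_mul, neg_zero, sub_zero, zero_pow (by omega : p ^ e - 1 ≠ 0)]
    rw [hasDeg₁]
    exact (asDeg_le_natDegree hp.ne_zero 0).trans_lt Nat.zero_lt_one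
  · have hf₀ : (-(C b * X)) ^ (p ^ e - 1) * (C a * X) =
        C ((-b) ^ (p ^ e - 1) * a) * X ^ p ^ e := by
      rw [← neg_mul, ← C_neg, mul_pow, mul_mul_mul_comm, ← pow_succ,
        Nat.sub_add_cancel (by omega), ← C_pow, ← C_mul]
    calc asDeg p ((-(C b * X)) ^ (p ^ e - 1) * (C a * X))
        ≤ 1 := hf₀ ▸ asDeg_C_mul_X_pow_le_one _ e
      _ < p ^ e - 1 := by omega
      _ = _ := (asDeg_C_sub_C_mul_X_pow_pred_mul hb h1 hm2).symm

/-- **Linear projections do not suffice.** Let `k` be an algebraically closed field of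
characteristic `p`, `m = p^e > 2`, and `a, b, c₁, c₂ ∈ k` with `(a, b) ≠ (0,0)` and
`a c₁ + b c₂ = 1`. For `t ∈ k` let `f_t (s) = (c₁ t - b s)^{m-1} (c₂ t + a s)`. Then the
Artin–Schreier-reduced degrees of `f_0` and `f_1` differ. -/
theorem asDeg_fiber_zero_ne_asDeg_fiber_one
    (p : ℕ) [Fact p.Prime] (k : Type*) [Field k] [IsAlgClosed k] [CharP k p]
    (e m : ℕ) (he : 1 ≤ e) (hm : m = p ^ e) (hm2 : 2 < m)
    (a b c₁ c₂ : k) (hab : ¬ (a = 0 ∧ b = 0)) (h1 : a * c₁ + b * c₂ = 1) :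
    asDeg p ((C (c₁ * 0) - C b * X) ^ (m - 1) * (C (c₂ * 0) + C a * X)) ≠
      asDeg p ((C (c₁ * 1) - C b * X) ^ (m - 1) * (C (c₂ * 1) + C a * X)) :=
  asDeg_fiber_zero_ne_asDeg_fiber_one_general p k e m hm hm2 a b c₁ c₂ h1
end

section
/- Let k be a field, let n ≥ 0, let f ∈ k[x_0, x_1, …, x_n] be a nonzero polynomial, and let d_1, …, d_n be positive integers such that the weight function w(b_0, b_1, …, b_n) = b_0 + d_1 b_1 + … + d_n b_n is injective on the support of f (the set of exponent vectors of monomials of f with nonzero coefficient). Then the total degree of the substituted polynomial f' = f(x_0, x_1 + x_0^{d_1}, …, x_n + x_0^{d_n}) equals max { w(b) : b ∈ supp(f) }. -/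
/-!
Give `x_0` weight `1` and `x_j` weight `d_j`. Each monomial `x^b` becomes, after the substitution,
a sum of monomials of degree at most `w b`, which gives `≤`. For `≥`, set `x_1 = ⋯ = x_n = 0`
afterwards: this does not raise the degree and turns `f'` into the one-variable polynomial
`∑_b f_b t^{w b}`. Since `w` is injective on `supp f`, no two of these terms cancel, so its
degree is `max { w b : b ∈ supp f }`.
-/

open MvPolynomial Finsupp

namespace MvPolynomial

variable {σ R : Type*} [CommSemiring R]

theorem totalDegree_aeval_le_weightedTotalDegree {τ : Type*} {g : σ → MvPolynomial τ R}
    {w : σ → ℕ} (hg : ∀ i, (g i).totalDegree ≤ w i) (p : MvPolynomial σ R) :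
    (aeval g p).totalDegree ≤ weightedTotalDegree w p := by
  conv_lhs => rw [p.as_sum, map_sum]
  refine totalDegree_finsetSum_le fun b hb => le_trans ?_ (le_weightedTotalDegree w hb)
  rw [aeval_monomial, algebraMap_eq, Finsupp.prod, weight_apply, Finsupp.sum]
  refine (totalDegree_mul _ _).trans ?_
  rw [totalDegree_C, zero_add]
  refine (totalDegree_finsetProd _ _).trans (Finset.sum_le_sum fun i _ => ?_)
  exact (totalDegree_pow _ _).trans (Nat.mul_le_mul_left _ (hg i))

theorem natDegree_aeval_le_weightedTotalDegree {g : σ → Polynomial R} {w : σ → ℕ}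
    (hg : ∀ i, (g i).natDegree ≤ w i) (p : MvPolynomial σ R) :
    (aeval g p).natDegree ≤ weightedTotalDegree w p := by
  conv_lhs => rw [p.as_sum, map_sum]
  refine Polynomial.natDegree_sum_le_of_forall_le _ _ fun b hb =>
    le_trans ?_ (le_weightedTotalDegree w hb)
  rw [aeval_monomial, Polynomial.algebraMap_eq, Finsupp.prod, weight_apply, Finsupp.sum]
  refine Polynomial.natDegree_mul_le.trans ?_
  rw [Polynomial.natDegree_C, zero_add]
  refine (Polynomial.natDegree_prod_le _ _).trans (Finset.sum_le_sum fun i _ => ?_)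
  exact Polynomial.natDegree_pow_le.trans (Nat.mul_le_mul_left _ (hg i))

theorem aeval_X_pow_monomial (w : σ → ℕ) (b : σ →₀ ℕ) (c : R) :
    aeval (fun i => (Polynomial.X : Polynomial R) ^ w i) (monomial b c) =
      Polynomial.C c * Polynomial.X ^ weight w b := by
  simp only [aeval_monomial, Polynomial.algebraMap_eq, Finsupp.prod, weight_apply, Finsupp.sum,
    ← pow_mul, Finset.prod_pow_eq_pow_sum, smul_eq_mul, mul_comm]

theorem coeff_aeval_X_pow_weight {w : σ → ℕ} {p : MvPolynomial σ R}
    (hw : Set.InjOn (weight w) (p.support : Set (σ →₀ ℕ))) {b : σ →₀ ℕ} (hb : b ∈ p.support) :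
    (aeval (fun i => (Polynomial.X : Polynomial R) ^ w i) p).coeff (weight w b) = coeff b p := by
  conv_lhs => rw [p.as_sum, map_sum]
  rw [Polynomial.finsetSum_coeff, Finset.sum_eq_single_of_mem b hb]
  · rw [aeval_X_pow_monomial, Polynomial.coeff_C_mul_X_pow, if_pos rfl]
  · intro b' hb' hne
    rw [aeval_X_pow_monomial, Polynomial.coeff_C_mul_X_pow, if_neg]
    exact fun h => hne (hw hb' hb h.symm)

theorem natDegree_aeval_X_pow_of_injOn {w : σ → ℕ} {p : MvPolynomial σ R}
    (hw : Set.InjOn (weight w) (p.support : Set (σ →₀ ℕ))) :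
    (aeval (fun i => (Polynomial.X : Polynomial R) ^ w i) p).natDegree = weightedTotalDegree w p := by
  refine le_antisymm (natDegree_aeval_le_weightedTotalDegree
    (fun i => Polynomial.natDegree_X_pow_le (R := R) _) p) (Finset.sup_le fun b hb => ?_)
  refine Polynomial.le_natDegree_of_ne_zero ?_
  rw [coeff_aeval_X_pow_weight hw hb]
  exact mem_support_iff.mp hb

end MvPolynomial

theorem Finsupp.weight_finCases_one {n : ℕ} (d : Fin n → ℕ) (b : Fin (n + 1) →₀ ℕ) :
    weight (Fin.cases 1 d : Fin (n + 1) → ℕ) b = b 0 + ∑ i : Fin n, d i * b i.succ := by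
  simp [weight_eq_sum, Fin.sum_univ_succ, mul_comm]

theorem totalDegree_subst_eq_sup_weight_general
    (k : Type*) [Field k] (n : ℕ) (f : MvPolynomial (Fin (n + 1)) k)
    (d : Fin n → ℕ) (hd : ∀ i, 0 < d i)
    (hw : Set.InjOn (fun b : Fin (n + 1) →₀ ℕ => b 0 + ∑ i : Fin n, d i * b i.succ)
      ↑f.support) :
    (aeval (Fin.cases (X 0) (fun j : Fin n => X j.succ + X 0 ^ d j) :
        Fin (n + 1) → MvPolynomial (Fin (n + 1)) k) f).totalDegree =
      f.support.sup (fun b => b 0 + ∑ i : Fin n, d i * b i.succ) := by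
  set e : Fin (n + 1) → ℕ := Fin.cases 1 d
  set g : Fin (n + 1) → MvPolynomial (Fin (n + 1)) k :=
    Fin.cases (X 0) (fun j : Fin n => X j.succ + X 0 ^ d j)
  have hweight : (fun b : Fin (n + 1) →₀ ℕ => b 0 + ∑ i : Fin n, d i * b i.succ) = weight e :=
    funext fun b => (weight_finCases_one d b).symm
  rw [hweight] at hw ⊢
  change (aeval g f).totalDegree = weightedTotalDegree e f
  have hg : ∀ i, (g i).totalDegree ≤ e i := by
    intro i
    cases i using Fin.cases with
    | zero => simp [g, e]
    | succ j =>
      refine (totalDegree_add _ _).trans (max_le ?_ ?_) <;>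
        simp [e, totalDegree_X_pow, Nat.one_le_iff_ne_zero.mpr (hd j).ne']
  refine le_antisymm (totalDegree_aeval_le_weightedTotalDegree hg f) ?_
  set ψ : MvPolynomial (Fin (n + 1)) k →ₐ[k] Polynomial k :=
    aeval (Fin.cases Polynomial.X 0)
  have hψ : ψ (aeval g f) = aeval (fun i => Polynomial.X ^ e i) f := by
    rw [← AlgHom.comp_apply]
    congr 1
    ext i
    cases i using Fin.cases <;> simp [ψ, g, e]
  calc weightedTotalDegree e f = (ψ (aeval g f)).natDegree := by
        rw [hψ, natDegree_aeval_X_pow_of_injOn hw]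
    _ ≤ weightedTotalDegree 1 (aeval g f) :=
        natDegree_aeval_le_weightedTotalDegree (fun i => by cases i using Fin.cases <;> simp) _
    _ = (aeval g f).totalDegree := weightedTotalDegree_one _

/-- **Degree after the nonlinear change of coordinates.** Let `f ∈ k[x_0, …, x_n]` be nonzero and
`d 1, …, d n` positive integers such that the weight `w b = b 0 + ∑ i, d i * b i.succ` is
injective on the support of `f`. Then the total degree of
`f' = f (x_0, x_1 + x_0^{d 1}, …, x_n + x_0^{d n})` equals `max { w b : b ∈ supp f }`. -/
theorem totalDegree_subst_eq_sup_weight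
    (k : Type*) [Field k] (n : ℕ) (f : MvPolynomial (Fin (n + 1)) k) (hf : f ≠ 0)
    (d : Fin n → ℕ) (hd : ∀ i, 0 < d i)
    (hw : Set.InjOn (fun b : Fin (n + 1) →₀ ℕ => b 0 + ∑ i : Fin n, d i * b i.succ)
      ↑f.support) :
    (aeval (Fin.cases (X 0) (fun j : Fin n => X j.succ + X 0 ^ d j) :
        Fin (n + 1) → MvPolynomial (Fin (n + 1)) k) f).totalDegree =
      f.support.sup (fun b => b 0 + ∑ i : Fin n, d i * b i.succ) :=
  totalDegree_subst_eq_sup_weight_general k n f d hd hw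
end
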